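/- Let A be a positively graded, locally finite algebra generated in degrees 0 and 1 such that A is a projective A_0-module and A_0 satisfies the splitting property (S). Then every Koszul A-module M is projective as an A_0-module. -/

import Mathlib

/-!
Fix a degree `n`. Since `Pⁱ` is generated in degree `i`, its degree-`n` part vanishes for
`i > n`, so the degree-`n` strand `0 → Pⁿₙ → ⋯ → P⁰ₙ → Mₙ → 0` of the linear resolution is a
finite exact sequence of `A₀`-modules. Its terms are `A₀`-projective, being direct summands of
the `A₀`-projective modules `Pⁱ` (`A` is `A₀`-projective). Going down the strand from `i = n`,
the image of `Pⁱ⁺¹ₙ → Pⁱₙ` is isomorphic to the cokernel one step higher, projective by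
induction, so by (S) its inclusion splits and the cokernel at `i` is projective too; at `i = 0`
this cokernel is `Mₙ`. Finally `M = ⊕ₙ Mₙ`.
-/

/-- A linear (graded) projective resolution `⋯ → P¹ → P⁰ → M → 0` of a graded module `M`
over a graded algebra `A = ⊕ 𝒜 i`: each `P i` is a graded projective `A`-module generated
in degree `i`, the differentials and augmentation are degree-preserving, and the complex
is exact. -/
structure LinearProjectiveResolution
    (k A : Type) [Field k] [Ring A] [Algebra k A] (𝒜 : ℕ → Submodule k A)
    (M : Type) [AddCommGroup M] [Module k M] [Module A M] [IsScalarTower k A M]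
    (ℳ : ℕ → Submodule k M) : Type 1 where
  P : ℕ → Type
  [acg : ∀ i, AddCommGroup (P i)]
  [modk : ∀ i, Module k (P i)]
  [modA : ∀ i, Module A (P i)]
  [tower : ∀ i, IsScalarTower k A (P i)]
  Pgr : ∀ i, ℕ → Submodule k (P i)
  Pgr_sup : ∀ i, iSup (Pgr i) = ⊤
  Pgr_indep : ∀ i, iSupIndep (Pgr i)
  Pgr_smul : ∀ (i n j : ℕ) (a : A) (x : P i), a ∈ 𝒜 n → x ∈ Pgr i j →
    a • x ∈ Pgr i (n + j)
  proj : ∀ i, Module.Projective A (P i)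
  gen : ∀ i, Submodule.span A (Pgr i i : Set (P i)) = ⊤
  ε : P 0 →ₗ[A] M
  d : ∀ i, P (i + 1) →ₗ[A] P i
  ε_gr : ∀ (j : ℕ) (x : P 0), x ∈ Pgr 0 j → ε x ∈ ℳ j
  d_gr : ∀ (i j : ℕ) (x : P (i + 1)), x ∈ Pgr (i + 1) j → d i x ∈ Pgr i j
  ε_surj : Function.Surjective ε
  exact0 : LinearMap.range (d 0) = LinearMap.ker ε
  exact : ∀ i, LinearMap.range (d (i + 1)) = LinearMap.ker (d i)

/-- A graded module `M` over the graded algebra `A = ⊕ 𝒜 i` (the family `ℳ` being an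
internal grading compatible with the one of `A`) is *Koszul* if it is generated in
degree 0 and admits a linear projective resolution. -/
def IsKoszulModule
    (k A : Type) [Field k] [Ring A] [Algebra k A] (𝒜 : ℕ → Submodule k A)
    (M : Type) [AddCommGroup M] [Module k M] [Module A M] [IsScalarTower k A M]
    (ℳ : ℕ → Submodule k M) : Prop :=
  iSup ℳ = ⊤ ∧ iSupIndep ℳ ∧
  (∀ (i j : ℕ) (a : A) (x : M), a ∈ 𝒜 i → x ∈ ℳ j → a • x ∈ ℳ (i + j)) ∧
  Submodule.span A (ℳ 0 : Set M) = ⊤ ∧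
  Nonempty (LinearProjectiveResolution k A 𝒜 M ℳ)

/-- The grading of the quotient module `A₀ = A/J` (concentrated in degree 0). -/
def degreeZeroGrading (k A : Type) [Field k] [Ring A] [Algebra k A]
    (𝒜 : ℕ → Submodule k A) : ℕ → Submodule k
      (A ⧸ (Submodule.span A (⋃ n : ℕ, (𝒜 (n + 1) : Set A)) : Submodule A A))
  | 0 => ⊤
  | _ + 1 => ⊥

/-- The graded algebra `A` is a *Koszul algebra* if `A₀ = A/J`, viewed as a graded
`A`-module concentrated in degree 0, is a Koszul module. -/
def IsKoszulAlgebra (k A : Type) [Field k] [Ring A] [Algebra k A]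
    (𝒜 : ℕ → Submodule k A) : Prop :=
  IsKoszulModule k A 𝒜
    (A ⧸ (Submodule.span A (⋃ n : ℕ, (𝒜 (n + 1) : Set A)) : Submodule A A))
    (degreeZeroGrading k A 𝒜)

universe w

universe u v

open Module

attribute [instance] LinearProjectiveResolution.acg LinearProjectiveResolution.modk
  LinearProjectiveResolution.modA LinearProjectiveResolution.tower

theorem Module.Projective.trans (R S M : Type*) [Semiring R] [Semiring S] [AddCommMonoid M]
    [Module R M] [Module S M] [Module R S] [IsScalarTower R S M] [IsScalarTower R S S]
    [Projective R S] [Projective S M] : Projective R M := by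
  classical
  obtain ⟨s, hs⟩ := ‹Projective S M›
  have : Projective R (M →₀ S) := .of_equiv (finsuppLequivDFinsupp R).symm
  exact .of_split (s.restrictScalars R) ((Finsupp.linearCombination S id).restrictScalars R)
    (LinearMap.ext hs)

theorem DirectSum.IsInternal.projective_iff {ι R M : Type*} [DecidableEq ι] [Ring R]
    [AddCommGroup M] [Module R M] {p : ι → Submodule R M} (hp : DirectSum.IsInternal p) :
    Projective R M ↔ ∀ i, Projective R (p i) := by
  let e := LinearEquiv.ofBijective (DirectSum.coeLinearMap p) hp
  rw [← Projective.directSum_iff]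
  exact ⟨fun _ => .of_equiv e.symm, fun _ => .of_equiv e⟩

/-- The splitting property (S), for modules in universe `v`. -/
def SplittingProperty (R : Type*) [Ring R] : Prop :=
  ∀ (X Y : Type v) [AddCommGroup X] [AddCommGroup Y] [Module R X] [Module R Y]
    (f : X →ₗ[R] Y), Projective R X → Projective R Y → Function.Injective f →
    ∃ g : Y →ₗ[R] X, g.comp f = LinearMap.id

namespace SplittingProperty

variable {R : Type*} [Ring R]

theorem down (hS : SplittingProperty.{max u v} R) : SplittingProperty.{u} R := by
  intro X Y _ _ _ _ f hX hY hf
  let eX : ULift.{v} X ≃ₗ[R] X := ULift.moduleEquiv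
  let eY : ULift.{v} Y ≃ₗ[R] Y := ULift.moduleEquiv
  obtain ⟨g, hg⟩ := hS (ULift.{v} X) (ULift.{v} Y) (eY.symm.toLinearMap ∘ₗ f ∘ₗ eX.toLinearMap)
    inferInstance inferInstance (eY.symm.injective.comp (hf.comp eX.injective))
  refine ⟨eX.toLinearMap ∘ₗ g ∘ₗ eY.symm.toLinearMap, LinearMap.ext fun x => ?_⟩
  simpa using congr_arg eX (LinearMap.congr_fun hg (eX.symm x))

theorem projective_quotient (hS : SplittingProperty.{u} R) {Y : Type u} [AddCommGroup Y]
    [Module R Y] [Projective R Y] (N : Submodule R Y) [Projective R N] :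
    Projective R (Y ⧸ N) := by
  obtain ⟨g, hg⟩ := hS N Y N.subtype ‹_› ‹_› N.injective_subtype
  have hc : IsCompl N (LinearMap.ker g) := LinearMap.isCompl_of_proj (LinearMap.congr_fun hg)
  have : Projective R (LinearMap.ker g) :=
    .of_split (LinearMap.ker g).subtype (Submodule.projectionOnto _ _ hc.symm)
      (LinearMap.ext (Submodule.projectionOnto_apply_left hc.symm))
  exact .of_equiv (Submodule.quotientEquivOfIsCompl N (LinearMap.ker g) hc).symm

theorem projective_of_exact (hS : SplittingProperty.{u} R) {Q : ℕ → Type u}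
    [∀ i, AddCommGroup (Q i)] [∀ i, Module R (Q i)] [∀ i, Projective R (Q i)]
    {N : Type u} [AddCommGroup N] [Module R N]
    (d : ∀ i, Q (i + 1) →ₗ[R] Q i) (ε : Q 0 →ₗ[R] N)
    (hd : ∀ i, Function.Exact (d (i + 1)) (d i)) (hε : Function.Exact (d 0) ε)
    (hε_surj : Function.Surjective ε) {n : ℕ} (hQ : ∀ i, n < i → Subsingleton (Q i)) :
    Projective R N := by
  have hcoker : ∀ m i, n ≤ i + m → Projective R (Q i ⧸ LinearMap.range (d i)) := by
    intro m
    induction m with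
    | zero =>
      intro i hi
      have : Subsingleton (Q (i + 1)) := hQ (i + 1) (by omega)
      exact .of_equiv (Submodule.quotEquivOfEqBot _
        (LinearMap.range_eq_bot.2 (Subsingleton.elim _ _))).symm
    | succ m ih =>
      intro i hi
      have : Projective R (Q (i + 1) ⧸ LinearMap.range (d (i + 1))) := ih (i + 1) (by omega)
      have : Projective R (LinearMap.range (d i)) :=
        .of_equiv (Submodule.quotEquivOfEq _ _ (hd i).linearMap_ker_eq.symm ≪≫ₗ
          (d i).quotKerEquivRange)
      exact hS.projective_quotient _
  have := hcoker n 0 (by omega)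
  exact .of_equiv (hε.linearEquivOfSurjective hε_surj)

end SplittingProperty

theorem Function.Exact.restrict {R X Y Z : Type*} [Ring R] [AddCommGroup X] [Module R X]
    [AddCommGroup Y] [Module R Y] [AddCommGroup Z] [Module R Z]
    {f : X →ₗ[R] Y} {g : Y →ₗ[R] Z} (hfg : Function.Exact f g)
    {p : Submodule R X} {q : Submodule R Y} {r : Submodule R Z}
    (hf : ∀ x ∈ p, f x ∈ q) (hg : ∀ y ∈ q, g y ∈ r)
    (hlift : ∀ y ∈ q, y ∈ Set.range f → ∃ x ∈ p, f x = y) :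
    Function.Exact (f.restrict hf) (g.restrict hg) := by
  intro y
  constructor
  · intro hy
    obtain ⟨x, hx, hxy⟩ := hlift y y.2 ((hfg y).1 (congr_arg Subtype.val hy))
    exact ⟨⟨x, hx⟩, Subtype.ext hxy⟩
  · rintro ⟨x, rfl⟩
    exact Subtype.ext (hfg.apply_apply_eq_zero x)

theorem LinearMap.exists_homogeneous_preimage {ι R P N : Type*} [Ring R] [AddCommGroup P]
    [Module R P] [AddCommGroup N] [Module R N] {𝒬 : ι → Submodule R P}
    {𝒩 : ι → Submodule R N} (h𝒬 : iSup 𝒬 = ⊤) (h𝒩 : iSupIndep 𝒩) (f : P →ₗ[R] N)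
    (hf : ∀ j, ∀ x ∈ 𝒬 j, f x ∈ 𝒩 j) {n : ι} {y : N} (hy : y ∈ 𝒩 n)
    (hyf : y ∈ Set.range f) : ∃ x ∈ 𝒬 n, f x = y := by
  obtain ⟨x, rfl⟩ := hyf
  have hx : x ∈ 𝒬 n ⊔ ⨆ (j) (_ : j ≠ n), 𝒬 j := by
    rw [← iSup_split_single, h𝒬]
    trivial
  obtain ⟨xn, hxn, x', hx', rfl⟩ := Submodule.mem_sup.1 hx
  have hmap : (⨆ (j) (_ : j ≠ n), 𝒬 j).map f ≤ ⨆ (j) (_ : j ≠ n), 𝒩 j := by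
    simp only [Submodule.map_iSup]
    exact iSup₂_mono fun j _ => Submodule.map_le_iff_le_comap.2 (hf j)
  have hx'n : f x' ∈ 𝒩 n := by
    simpa using (𝒩 n).sub_mem hy (hf n xn hxn)
  have : f x' = 0 := Submodule.disjoint_def.1 (h𝒩 n) _ hx'n (hmap ⟨x', hx', rfl⟩)
  exact ⟨xn, hxn, by simp [this]⟩

def Submodule.ofSMulMem {k B N : Type*} [Semiring k] [Semiring B] [AddCommMonoid N]
    [Module k N] [Module B N] (T : Submodule k N) (h : ∀ (b : B) {x : N}, x ∈ T → b • x ∈ T) :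
    Submodule B N where
  toAddSubmonoid := T.toAddSubmonoid
  smul_mem' b _ hx := h b hx

theorem eq_bot_of_span_eq_top_of_lt {k A P : Type*} [CommRing k] [Ring A] [Algebra k A]
    (𝒜 : ℕ → Submodule k A) [DirectSum.Decomposition 𝒜] [AddCommGroup P] [Module k P]
    [Module A P] {𝒬 : ℕ → Submodule k P} (hind : iSupIndep 𝒬)
    (hsmul : ∀ (m j : ℕ) (a : A) (x : P), a ∈ 𝒜 m → x ∈ 𝒬 j → a • x ∈ 𝒬 (m + j))
    {i : ℕ} (hgen : Submodule.span A (𝒬 i : Set P) = ⊤) {j : ℕ} (hj : j < i) : 𝒬 j = ⊥ := by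
  -- `T` is an `A`-submodule containing the generators `𝒬 i`, yet it meets `𝒬 j` trivially.
  set T : Submodule k P := ⨆ m, 𝒬 (m + i)
  have hT_homogeneous (m : ℕ) (a : 𝒜 m) {x : P} (hx : x ∈ T) : (a : A) • x ∈ T := by
    induction hx using Submodule.iSup_induction' with
    | mem m' x hx =>
      exact Submodule.mem_iSup_of_mem (m + m') (by simpa [add_assoc] using hsmul _ _ _ _ a.2 hx)
    | zero => simp
    | add x y _ _ hx hy => simpa [smul_add] using T.add_mem hx hy
  have hT (a : A) {x : P} (hx : x ∈ T) : a • x ∈ T := by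
    induction a using DirectSum.Decomposition.inductionOn 𝒜 with
    | zero => simp
    | homogeneous a => exact hT_homogeneous _ a hx
    | add a b ha hb => simpa [add_smul] using T.add_mem ha hb
  have hT_top : T.ofSMulMem hT = ⊤ := by
    rw [eq_top_iff, ← hgen, Submodule.span_le]
    exact fun x hx => Submodule.mem_iSup_of_mem 0 (by simpa using hx)
  have hT_le : T ≤ ⨆ (l) (_ : l ≠ j), 𝒬 l :=
    iSup_le fun m => le_iSup₂_of_le (m + i) (by omega) le_rfl
  refine (Submodule.eq_bot_iff _).2 fun x hx => Submodule.disjoint_def.1 (hind j) x hx (hT_le ?_)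
  change x ∈ T.ofSMulMem hT
  simp [hT_top]

section GradedPiece

variable {k A N : Type*} [CommRing k] [Ring A] [Algebra k A] {𝒜 : ℕ → Submodule k A}
  {A₀ : Subalgebra k A} [AddCommGroup N] [Module k N] [Module A N]

def gradedPiece (hA₀ : A₀.toSubmodule = 𝒜 0) (𝒩 : ℕ → Submodule k N)
    (h𝒩 : ∀ (i j : ℕ) (a : A) (x : N), a ∈ 𝒜 i → x ∈ 𝒩 j → a • x ∈ 𝒩 (i + j)) (n : ℕ) :
    Submodule A₀ N :=
  (𝒩 n).ofSMulMem fun a x hx => by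
    have h := h𝒩 0 n a x (by rw [← hA₀]; exact a.2) hx
    rwa [zero_add] at h

theorem DirectSum.IsInternal.gradedPiece (hA₀ : A₀.toSubmodule = 𝒜 0)
    {𝒩 : ℕ → Submodule k N}
    (h𝒩 : ∀ (i j : ℕ) (a : A) (x : N), a ∈ 𝒜 i → x ∈ 𝒩 j → a • x ∈ 𝒩 (i + j))
    (h : DirectSum.IsInternal 𝒩) : DirectSum.IsInternal (gradedPiece hA₀ 𝒩 h𝒩) :=
  h

end GradedPiece

namespace LinearProjectiveResolution

variable {k A : Type} [Field k] [Ring A] [Algebra k A] {𝒜 : ℕ → Submodule k A}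
  {M : Type} [AddCommGroup M] [Module k M] [Module A M] [IsScalarTower k A M]
  {ℳ : ℕ → Submodule k M} (res : LinearProjectiveResolution k A 𝒜 M ℳ)
  {A₀ : Subalgebra k A} (hA₀ : A₀.toSubmodule = 𝒜 0)

theorem isInternal (i : ℕ) : DirectSum.IsInternal (res.Pgr i) :=
  DirectSum.isInternal_submodule_of_iSupIndep_of_iSup_eq_top (res.Pgr_indep i) (res.Pgr_sup i)

theorem exact_d (i : ℕ) : Function.Exact (res.d (i + 1)) (res.d i) :=
  LinearMap.exact_iff.2 (res.exact i).symm

theorem exact_d_ε : Function.Exact (res.d 0) res.ε :=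
  LinearMap.exact_iff.2 res.exact0.symm

abbrev strand (n i : ℕ) : Submodule A₀ (res.P i) :=
  gradedPiece hA₀ (res.Pgr i) (res.Pgr_smul i) n

def strandD (n i : ℕ) : res.strand hA₀ n (i + 1) →ₗ[A₀] res.strand hA₀ n i :=
  ((res.d i).restrictScalars A₀).restrict fun x hx => res.d_gr i n x hx

def strandε (hℳ : ∀ (i j : ℕ) (a : A) (x : M), a ∈ 𝒜 i → x ∈ ℳ j → a • x ∈ ℳ (i + j))
    (n : ℕ) : res.strand hA₀ n 0 →ₗ[A₀] gradedPiece hA₀ ℳ hℳ n :=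
  (res.ε.restrictScalars A₀).restrict fun x hx => res.ε_gr n x hx

theorem exact_strandD (n i : ℕ) :
    Function.Exact (res.strandD hA₀ n (i + 1)) (res.strandD hA₀ n i) :=
  Function.Exact.restrict (f := (res.d (i + 1)).restrictScalars A₀)
    (g := (res.d i).restrictScalars A₀) (res.exact_d i) _ _ fun _ hy hyf =>
    ((res.d (i + 1)).restrictScalars A₀).exists_homogeneous_preimage
      ((res.isInternal (i + 2)).gradedPiece hA₀ (res.Pgr_smul _)).submodule_iSup_eq_top
      ((res.isInternal (i + 1)).gradedPiece hA₀ (res.Pgr_smul _)).submodule_iSupIndep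
      (fun j x hx => res.d_gr _ j x hx) hy hyf

variable {hℳ : ∀ (i j : ℕ) (a : A) (x : M), a ∈ 𝒜 i → x ∈ ℳ j → a • x ∈ ℳ (i + j)}

theorem exact_strandε (n : ℕ) : Function.Exact (res.strandD hA₀ n 0) (res.strandε hA₀ hℳ n) :=
  Function.Exact.restrict (f := (res.d 0).restrictScalars A₀) (g := res.ε.restrictScalars A₀)
    res.exact_d_ε _ _ fun _ hy hyf =>
    ((res.d 0).restrictScalars A₀).exists_homogeneous_preimage
      ((res.isInternal 1).gradedPiece hA₀ (res.Pgr_smul _)).submodule_iSup_eq_top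
      ((res.isInternal 0).gradedPiece hA₀ (res.Pgr_smul _)).submodule_iSupIndep
      (fun j x hx => res.d_gr _ j x hx) hy hyf

theorem surjective_strandε (hsup : iSup ℳ = ⊤) (hind : iSupIndep ℳ) (n : ℕ) :
    Function.Surjective (res.strandε hA₀ hℳ n) := by
  intro y
  obtain ⟨x, hx, hxy⟩ := (res.ε.restrictScalars A₀).exists_homogeneous_preimage
    ((res.isInternal 0).gradedPiece hA₀ (res.Pgr_smul _)).submodule_iSup_eq_top
    ((DirectSum.isInternal_submodule_of_iSupIndep_of_iSup_eq_top hind hsup).gradedPiece hA₀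
      hℳ).submodule_iSupIndep
    (fun j x hx => res.ε_gr j x hx) y.2 (res.ε_surj y)
  exact ⟨⟨x, hx⟩, Subtype.ext hxy⟩

theorem subsingleton_strand [DirectSum.Decomposition 𝒜] {n i : ℕ} (hni : n < i) :
    Subsingleton (res.strand hA₀ n i) := by
  have hbot : res.Pgr i n = ⊥ :=
    eq_bot_of_span_eq_top_of_lt 𝒜 (res.Pgr_indep i) (res.Pgr_smul i) (res.gen i) hni
  refine ⟨fun x y => Subtype.ext ?_⟩
  have hx : (x : res.P i) ∈ res.Pgr i n := x.2
  have hy : (y : res.P i) ∈ res.Pgr i n := y.2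
  rw [hbot, Submodule.mem_bot] at hx hy
  rw [hx, hy]

theorem projective_strand (hAproj : Projective A₀ A) (n i : ℕ) :
    Projective A₀ (res.strand hA₀ n i) := by
  have := res.proj i
  exact ((res.isInternal i).gradedPiece hA₀ (res.Pgr_smul i)).projective_iff.1
    (Projective.trans A₀ A (res.P i)) n

end LinearProjectiveResolution

theorem stmt10_general
    {k A : Type} [Field k] [Ring A] [Algebra k A]
    (𝒜 : ℕ → Submodule k A) [GradedAlgebra 𝒜]
    (A₀ : Subalgebra k A) (hA₀ : A₀.toSubmodule = 𝒜 0)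
    -- `A` is a projective `A₀`-module
    (hAproj : Module.Projective A₀ A)
    -- the splitting property (S)
    (hS : ∀ (X Y : Type w) [AddCommGroup X] [AddCommGroup Y]
      [Module A₀ X] [Module A₀ Y] (f : X →ₗ[A₀] Y),
      Module.Projective A₀ X → Module.Projective A₀ Y → Function.Injective f →
      ∃ g : Y →ₗ[A₀] X, g.comp f = LinearMap.id)
    -- `M` is a Koszul `A`-module
    {M : Type} [AddCommGroup M] [Module k M] [Module A M] [IsScalarTower k A M]
    (ℳ : ℕ → Submodule k M)
    (hM : IsKoszulModule k A 𝒜 M ℳ) :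
    Module.Projective A₀ M := by
  obtain ⟨hsup, hind, hℳ, -, ⟨res⟩⟩ := hM
  have hℳint : DirectSum.IsInternal (gradedPiece hA₀ ℳ hℳ) :=
    (DirectSum.isInternal_submodule_of_iSupIndep_of_iSup_eq_top hind hsup).gradedPiece hA₀ hℳ
  refine hℳint.projective_iff.2 fun n => ?_
  have := res.projective_strand hA₀ hAproj n
  exact SplittingProperty.down.{0, w} hS |>.projective_of_exact (res.strandD hA₀ n)
    (res.strandε hA₀ hℳ n) (res.exact_strandD hA₀ n) (res.exact_strandε hA₀ n)
    (res.surjective_strandε hA₀ hsup hind n) fun _ hi => res.subsingleton_strand hA₀ hi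

/-- Let `A` be a positively graded, locally finite algebra generated in
degrees 0 and 1 such that `A` is a projective `A₀`-module and `A₀` satisfies the
splitting property (S).  Then every Koszul `A`-module `M` is projective as an
`A₀`-module. -/
theorem stmt10
    {k A : Type} [Field k] [Ring A] [Algebra k A]
    (𝒜 : ℕ → Submodule k A) [GradedAlgebra 𝒜]
    (hlf : ∀ i, FiniteDimensional k (𝒜 i))
    (hgen : ∀ i, 𝒜 1 * 𝒜 i = 𝒜 (i + 1))
    (A₀ : Subalgebra k A) (hA₀ : A₀.toSubmodule = 𝒜 0)
    -- `A` is a projective `A₀`-module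
    (hAproj : Module.Projective A₀ A)
    -- the splitting property (S)
    (hS : ∀ (X Y : Type w) [AddCommGroup X] [AddCommGroup Y]
      [Module A₀ X] [Module A₀ Y] (f : X →ₗ[A₀] Y),
      Module.Projective A₀ X → Module.Projective A₀ Y → Function.Injective f →
      ∃ g : Y →ₗ[A₀] X, g.comp f = LinearMap.id)
    -- `M` is a Koszul `A`-module
    {M : Type} [AddCommGroup M] [Module k M] [Module A M] [IsScalarTower k A M]
    (ℳ : ℕ → Submodule k M)
    (hM : IsKoszulModule k A 𝒜 M ℳ) :
    Module.Projective A₀ M :=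
  stmt10_general 𝒜 A₀ hA₀ hAproj hS ℳ hM
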